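/- arXiv:2510.19991 — 2 statements merged into one kernel-verified Lean document; each statement's English description precedes it below -/
import Mathlib

section
/- If tr(ad η) = 0 for every η ∈ 𝔤 (the unimodularity condition on the Lie algebra), then for every orthonormal basis (e_1, …, e_n) of 𝔤 the drift element J := ∑_{i=1}^{n} (ad e_i)† e_i is zero; consequently the Stratonovich drift of Brownian motion on a unimodular Lie group vanishes. -/
open RealInnerProductSpace

/-- Let `𝔤` be a finite-dimensional real Lie algebra (bracket given by the
bilinear map `bracket`, alternating and satisfying the Jacobi identity) endowed with an inner
product, and let `(ad ξ)†` denote the adjoint of `ad ξ = bracket ξ` with respect to the inner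
product.  If `tr (ad η) = 0` for every `η ∈ 𝔤` (unimodularity), then for every orthonormal
basis `(e_1, …, e_n)` of `𝔤` the drift element `J = ∑ i, (ad e_i)† e_i` is zero; consequently
the Stratonovich drift of Brownian motion on a unimodular Lie group vanishes. -/
theorem unimodular_drift_vanishes
    {L : Type*} [NormedAddCommGroup L] [InnerProductSpace ℝ L] [FiniteDimensional ℝ L]
    (bracket : L →ₗ[ℝ] L →ₗ[ℝ] L)
    (halt : ∀ x : L, bracket x x = 0)
    (hjacobi : ∀ x y z : L,
      bracket x (bracket y z) + bracket y (bracket z x) + bracket z (bracket x y) = 0)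
    (huni : ∀ η : L, LinearMap.trace ℝ L (bracket η) = 0)
    {n : ℕ} (e : OrthonormalBasis (Fin n) ℝ L) :
    ∑ i, LinearMap.adjoint (bracket (e i)) (e i) = 0 := by
  have hanti : ∀ x y : L, bracket x y = - bracket y x := by
    intro x y
    have h := halt (x + y)
    simp only [map_add, LinearMap.add_apply, halt] at h
    have h' : bracket y x + bracket x y = 0 := by simpa using h
    exact eq_neg_of_add_eq_zero_left (by rw [add_comm]; exact h')
  have hsum : ∀ x : L, ⟪∑ i, LinearMap.adjoint (bracket (e i)) (e i), x⟫ = 0 := by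
    intro x
    rw [sum_inner]
    have htr : LinearMap.trace ℝ L (bracket x) = 0 := huni x
    rw [LinearMap.trace_eq_matrix_trace ℝ e.toBasis, Matrix.trace] at htr
    have : ∀ i, ⟪LinearMap.adjoint (bracket (e i)) (e i), x⟫
        = - (LinearMap.toMatrix e.toBasis e.toBasis (bracket x)).diag i := by
      intro i
      rw [LinearMap.adjoint_inner_left]
      rw [hanti (e i) x, inner_neg_right]
      congr 1
      simp only [Matrix.diag, LinearMap.toMatrix_apply, OrthonormalBasis.coe_toBasis,
        OrthonormalBasis.coe_toBasis_repr_apply, ← e.repr_apply_apply]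
      try exact real_inner_comm _ _
    simp_rw [this]
    simp only [Finset.sum_neg_distrib, neg_eq_zero]
    simpa [Matrix.diag] using htr
  have := hsum (∑ i, LinearMap.adjoint (bracket (e i)) (e i))
  exact inner_self_eq_zero.mp this
end

section
/- For every x ∈ E with ‖x‖ = 1, ∑_{i=1}^{n+1} P(x)( D V_i(x)( V_i(x) ) ) = 0; that is, the Stratonovich drift term ∑_i ∇_{P e_i} P e_i of Brownian motion on the unit sphere Sⁿ vanishes. -/
open RealInnerProductSpace

theorem aux_hasFDeriv {E : Type*} [NormedAddCommGroup E] [InnerProductSpace ℝ E]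
    (v x : E) :
    HasFDerivAt (fun z : E => v - ⟪z, v⟫ • z)
      ((0 : E →L[ℝ] E) - (⟪x, v⟫ • ContinuousLinearMap.id ℝ E + (innerSL ℝ v).smulRight x)) x := by
  have h1 : HasFDerivAt (fun z : E => ⟪z, v⟫) (innerSL ℝ v) x := by
    have := (innerSL ℝ v).hasFDerivAt (x := x)
    simpa [real_inner_comm] using this
  exact (hasFDerivAt_const v x).sub (h1.smul (hasFDerivAt_id x))

/-- Let `E` be a real inner product space of dimension `n+1` with
orthonormal basis `(e_1, …, e_{n+1})`.  For a unit vector `x`, `P x w = w − ⟨w, x⟩ x` is the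
orthogonal projection onto the tangent space of the unit sphere at `x`, and
`V_i z = e_i − ⟨z, e_i⟩ z`, so that `V_i x = P x e_i`.  Then for every unit vector `x`,
`∑ i, P x (D V_i(x) (V_i x)) = 0`: the Stratonovich drift term `∑ i ∇_{P e_i} P e_i` of
Brownian motion on the unit sphere `Sⁿ` vanishes. -/
theorem sphere_stratonovich_drift_vanishes
    {E : Type*} [NormedAddCommGroup E] [InnerProductSpace ℝ E] [FiniteDimensional ℝ E]
    {n : ℕ} (e : OrthonormalBasis (Fin (n + 1)) ℝ E)
    (x : E) (hx : ‖x‖ = 1) :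
    ∑ i : Fin (n + 1),
      (fun w => w - ⟪w, x⟫ • x)
        (fderiv ℝ (fun z => e i - ⟪z, e i⟫ • z) x (e i - ⟪x, e i⟫ • x)) = 0 := by
  have hxx : ⟪x, x⟫ = 1 := by
    rw [real_inner_self_eq_norm_sq, hx]; norm_num
  have key : ∀ i : Fin (n + 1),
      (fun w => w - ⟪w, x⟫ • x)
        (fderiv ℝ (fun z => e i - ⟪z, e i⟫ • z) x (e i - ⟪x, e i⟫ • x))
      = ⟪x, e i⟫ ^ 2 • x - ⟪x, e i⟫ • e i := by
    intro i
    rw [(aux_hasFDeriv (e i) x).fderiv]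
    have hee : ⟪e i, e i⟫ = 1 := by
      rw [real_inner_self_eq_norm_sq, e.orthonormal.1 i]; norm_num
    simp only [ContinuousLinearMap.sub_apply, ContinuousLinearMap.add_apply,
      ContinuousLinearMap.smul_apply, ContinuousLinearMap.id_apply,
      ContinuousLinearMap.smulRight_apply, innerSL_apply_apply, ContinuousLinearMap.zero_apply]
    simp only [inner_sub_left, inner_sub_right, inner_add_left, inner_add_right,
      inner_neg_left, inner_neg_right, inner_smul_left, inner_smul_right,
      inner_zero_left, zero_sub, hxx, hee, real_inner_comm (e i) x, conj_trivial, one_smul]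
    module
  rw [Finset.sum_congr rfl fun i _ => key i]
  rw [Finset.sum_sub_distrib, ← Finset.sum_smul]
  have h1 : ∑ i : Fin (n+1), ⟪x, e i⟫ ^ 2 = 1 := by
    have := e.sum_inner_mul_inner x x
    rw [hxx] at this
    rw [← this]
    congr 1; ext i; rw [real_inner_comm (e i) x]; ring
  have h2 : ∑ i : Fin (n+1), ⟪x, e i⟫ • e i = x := by
    have := e.sum_repr' x
    simpa [real_inner_comm] using this
  rw [h1, h2, one_smul, sub_self]
end
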